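/- Suppose J′, J^Θ ⊆ ℤ/fℤ satisfy: i ∈ J′ ⟺ i ∈ J^Θ for all i ∉ J₀; and for every ν ∈ M̃, either (ν ∈ J′, T_ν ⊆ J′ and T_ν ∩ J^Θ = ∅) or (ν ∉ J′, T_ν ∩ J′ = ∅ and T_ν ⊆ J^Θ). Set s′ = s(b′,J′), t′ = t(b′,J′), s^Θ = s(b^Θ,J^Θ), t^Θ = t(b^Θ,J^Θ), and define s^γ_i = s′_i if i ∈ J′ and s^γ_i = s^Θ_i if i ∉ J′, and t^γ_i = t′_i if i ∈ J′ and t^γ_i = t^Θ_i if i ∉ J′. Then for every i ∈ ℤ/fℤ: A_i(s^γ, s^Θ) = p^f − 1 if i ∈ J′ and i+1 ∈ J₀, else 0; A_i(t^Θ, t^γ) = p^f − 1 if i ∈ J′ and i+1 ∈ J₀, else 0; A_i(s^γ, s′) = p^f − 1 if i ∉ J′ and i+1 ∈ J₀, else 0; and A_i(t′, t^γ) = p^f − 1 if i ∉ J′ and i+1 ∈ J₀, else 0. -/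

import Mathlib

/-!
Write `carry f k J i` for the indicator of `i ∈ J ∧ k (i + 1) = 1`. Along a run `T_ν`, membership
in `J'` is constant and equal to that of `ν`, and `JTh` is the complement of `J'` there. A case
check then gives `s^γ_j - s^Θ_j = p e(j - 1) - e(j)` for `e = carry f k J'`, and the same for
`s^γ - s'` with `e = carry f k J'ᶜ`; for a difference of this shape the sum `A_i` telescopes to
`(p^f - 1) e(i)`. The statements about `t` follow because `s + t` is the same for all three
weights, since `b'_{i,1} = b^Θ_{i,1} + b^Θ_{i,2}`.
-/

open scoped Classical
noncomputable section

/-- `Σ(v) = Σ_{i=0}^{f−1} v_i · p^{f−1−i}`. -/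
def Sig (p f : ℕ) (v : ZMod f → ℤ) : ℤ :=
  ∑ i ∈ Finset.range f, v (i : ZMod f) * (p : ℤ) ^ (f - 1 - i)

/-- `A_i(c,d) = Σ_{j=1}^{f} p^{f−j} · (c_{i+j} − d_{i+j})`. -/
def Ai (p f : ℕ) (c d : ZMod f → ℤ) (i : ZMod f) : ℤ :=
  ∑ j ∈ Finset.Icc 1 f, (p : ℤ) ^ (f - j) * (c (i + (j : ZMod f)) - d (i + (j : ZMod f)))

/-- `T_ν`: the maximal run of indices with `k`-value 1 following `ν`. -/
def Trun (f : ℕ) (k : ZMod f → ℤ) (ν : ZMod f) : Set (ZMod f) :=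
  {i | ∃ s : ℕ, 1 ≤ s ∧ i = ν + (s : ZMod f) ∧
        ∀ j : ℕ, 1 ≤ j → j ≤ s → k (ν + (j : ZMod f)) = 1}

/-- `b_{i,1} = k_i − 1`. -/
def b1 (f : ℕ) (k : ZMod f → ℤ) : ZMod f → ℤ := fun i => k i - 1

/-- the constantly zero second component. -/
def zero2 (f : ℕ) : ZMod f → ℤ := fun _ => 0

/-- `b′_{i,1}`. -/
def bp1 (p f : ℕ) (k : ZMod f → ℤ) : ZMod f → ℤ := fun i =>
  if k i = 1 then (if k (i + 1) = 1 then (p : ℤ) - 1 else (p : ℤ))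
  else (if k (i + 1) = 1 then k i - 2 else k i - 1)

/-- `b^μ_{i,1}`. -/
def bmu1 (p f : ℕ) (k : ZMod f → ℤ) (μ : ZMod f) : ZMod f → ℤ := fun i =>
  if i = μ then k μ - 1 else bp1 p f k i

/-- `b^μ_{i,2}`. -/
def bmu2 (f : ℕ) (μ : ZMod f) : ZMod f → ℤ := fun i => if i = μ then -1 else 0

/-- `b^Θ_{i,1}`. -/
def bth1 (p f : ℕ) (k : ZMod f → ℤ) : ZMod f → ℤ := fun i =>
  if k i = 1 then (if k (i + 1) = 1 then (p : ℤ) - 1 else (p : ℤ)) else k i - 1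

/-- `b^Θ_{i,2}`. -/
def bth2 (f : ℕ) (k : ZMod f → ℤ) : ZMod f → ℤ := fun i =>
  if k i ≠ 1 ∧ k (i + 1) = 1 then -1 else 0

/-- `s_i(c,S) = c_{i,1}` if `i ∈ S`, else `c_{i,2}`. -/
def sW (f : ℕ) (c1 c2 : ZMod f → ℤ) (S : Set (ZMod f)) : ZMod f → ℤ :=
  fun i => if i ∈ S then c1 i else c2 i

/-- `t_i(c,S) = c_{i,2}` if `i ∈ S`, else `c_{i,1}`. -/
def tW (f : ℕ) (c1 c2 : ZMod f → ℤ) (S : Set (ZMod f)) : ZMod f → ℤ :=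
  fun i => if i ∈ S then c2 i else c1 i

/-- The set `𝒫′` of Definition 3.7 of the paper. -/
def memP' (p f : ℕ) (r : ZMod f → ℤ) : Prop :=
  (∀ i, r i = 0 ∨ r i = 1 ∨ r i = (p : ℤ) - 1 ∨ r i = (p : ℤ)) ∧
  (∀ i, r i = (p : ℤ) → (r (i + 1) = 0 ∨ r (i + 1) = 1)) ∧
  (∀ i, (r i = 1 ∨ r i = (p : ℤ) - 1) → (r (i + 1) = (p : ℤ) - 1 ∨ r (i + 1) = (p : ℤ))) ∧
  (∀ i, r i = 0 →
    ((∀ j, r j = 0) ∨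
      ∃ s t : ℕ, 1 ≤ s ∧ 1 ≤ t ∧
        (∀ j : ℕ, 1 ≤ j → j ≤ s - 1 → r (i + (j : ZMod f)) = 0) ∧
        r (i + (s : ZMod f)) = 1 ∧
        (∀ j : ℕ, 1 ≤ j → j ≤ t - 1 → r (i - (j : ZMod f)) = 0) ∧
        r (i - (t : ZMod f)) = (p : ℤ)))

/-- The exceptional case of Theorem 3.9 of the paper. -/
def Exceptional (p f : ℕ) (r : ZMod f → ℤ) (J : Set (ZMod f)) : Prop :=
  memP' p f r ∧ (∀ i, (r i = (p : ℤ) - 1 ∨ r i = (p : ℤ)) → i ∈ J) ∧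
    (∀ i, r i = 1 → i ∉ J)

theorem Ai_eq_of_sub_eq (p f : ℕ) (c d e : ZMod f → ℤ)
    (h : ∀ j, c j - d j = p * e (j - 1) - e j) (i : ZMod f) :
    Ai p f c d i = ((p : ℤ) ^ f - 1) * e i := by
  set g : ℕ → ℤ := fun m => (p : ℤ) ^ (f - m) * e (i + m)
  have hterm : ∀ m ∈ Finset.range f,
      (p : ℤ) ^ (f - (1 + m)) * (c (i + (1 + m : ℕ)) - d (i + (1 + m : ℕ))) = g m - g (m + 1) := by
    intro m hm
    have hpow : (p : ℤ) ^ (f - m) = (p : ℤ) ^ (f - (m + 1)) * p := by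
      rw [← pow_succ]; congr 1; have := Finset.mem_range.mp hm; omega
    simp only [g, h, hpow, add_comm 1 m, Nat.cast_succ, ← add_assoc, add_sub_cancel_right]
    ring
  calc Ai p f c d i = ∑ m ∈ Finset.range f, (g m - g (m + 1)) := by
        rw [Ai, ← Finset.Ico_add_one_right_eq_Icc, Finset.sum_Ico_eq_sum_range, Nat.add_sub_cancel]
        exact Finset.sum_congr rfl hterm
    _ = g 0 - g f := Finset.sum_range_sub' g f
    _ = ((p : ℤ) ^ f - 1) * e i := by simp [g]; ring

theorem exists_mem_Trun_of_eq_one {f : ℕ} [NeZero f] {k : ZMod f → ℤ} (hnotone : ∃ i, k i ≠ 1)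
    {j : ZMod f} (hj : k j = 1) :
    ∃ ν, k ν ≠ 1 ∧ k (ν + 1) = 1 ∧ j ∈ Trun f k ν ∧ (j - 1 = ν ∨ j - 1 ∈ Trun f k ν) := by
  obtain ⟨i₀, hi₀⟩ := hnotone
  have hex : ∃ t : ℕ, k (j - t) ≠ 1 := ⟨(j - i₀).val, by simpa using hi₀⟩
  set t := Nat.find hex
  have hν : k (j - t) ≠ 1 := Nat.find_spec hex
  have ht : 1 ≤ t := Nat.one_le_iff_ne_zero.mpr fun h => hν (by simpa [h] using hj)
  have hrun : ∀ m : ℕ, 1 ≤ m → m ≤ t → k (j - t + m) = 1 := fun m _ hmt => by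
    have := Nat.find_min hex (show t - m < t by omega)
    rwa [not_not, Nat.cast_sub hmt, sub_sub_eq_add_sub, add_sub_right_comm] at this
  have hjt : j = j - t + (t : ℕ) := (sub_add_cancel j _).symm
  refine ⟨j - t, hν, by exact_mod_cast hrun 1 le_rfl ht, ⟨t, ht, hjt, hrun⟩, ?_⟩
  rcases ht.eq_or_lt with h | h
  · left; rw [← h]; simp
  · right
    refine ⟨t - 1, by omega, ?_, fun m h₁ h₂ => hrun m h₁ (by omega)⟩
    rw [Nat.cast_sub ht]; ring

section

variable {p f : ℕ} {k : ZMod f → ℤ} {J' JTh : Set (ZMod f)}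

def carry (f : ℕ) (k : ZMod f → ℤ) (J : Set (ZMod f)) (i : ZMod f) : ℤ :=
  if i ∈ J ∧ k (i + 1) = 1 then 1 else 0

def sGamma (p f : ℕ) (k : ZMod f → ℤ) (J' JTh : Set (ZMod f)) (i : ZMod f) : ℤ :=
  if i ∈ J' then sW f (bp1 p f k) (zero2 f) J' i else sW f (bth1 p f k) (bth2 f k) JTh i

def tGamma (p f : ℕ) (k : ZMod f → ℤ) (J' JTh : Set (ZMod f)) (i : ZMod f) : ℤ :=
  if i ∈ J' then tW f (bp1 p f k) (zero2 f) J' i else tW f (bth1 p f k) (bth2 f k) JTh i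

theorem sW_add_tW (c₁ c₂ : ZMod f → ℤ) (S : Set (ZMod f)) (i : ZMod f) :
    sW f c₁ c₂ S i + tW f c₁ c₂ S i = c₁ i + c₂ i := by
  unfold sW tW; split_ifs <;> ring

theorem bp1_eq_bth1_add_bth2 (i : ZMod f) : bp1 p f k i = bth1 p f k i + bth2 f k i := by
  unfold bp1 bth1 bth2; split_ifs <;> omega

theorem sGamma_add_tGamma (i : ZMod f) :
    sGamma p f k J' JTh i + tGamma p f k J' JTh i = bth1 p f k i + bth2 f k i := by
  unfold sGamma tGamma
  split_ifs
  · rw [sW_add_tW, zero2, add_zero, bp1_eq_bth1_add_bth2]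
  · exact sW_add_tW _ _ _ _

theorem tW_sub_tGamma {c₁ c₂ : ZMod f → ℤ} {S : Set (ZMod f)}
    (hc : ∀ j, c₁ j + c₂ j = bth1 p f k j + bth2 f k j) (j : ZMod f) :
    tW f c₁ c₂ S j - tGamma p f k J' JTh j = sGamma p f k J' JTh j - sW f c₁ c₂ S j := by
  linarith [sW_add_tW c₁ c₂ S j, sGamma_add_tGamma (p := p) (k := k) (J' := J') (JTh := JTh) j,
    hc j]

theorem mem_sub_one_iff_and_mem_JTh_iff [NeZero f] (hnotone : ∃ i, k i ≠ 1)
    (hblocks : ∀ ν, (k ν ≠ 1 ∧ k (ν + 1) = 1) →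
      (ν ∈ J' ∧ Trun f k ν ⊆ J' ∧ Trun f k ν ∩ JTh = ∅) ∨
      (ν ∉ J' ∧ Trun f k ν ∩ J' = ∅ ∧ Trun f k ν ⊆ JTh))
    {j : ZMod f} (hj : k j = 1) : (j - 1 ∈ J' ↔ j ∈ J') ∧ (j ∈ JTh ↔ j ∉ J') := by
  obtain ⟨ν, hν, hν₁, hjT, hprev⟩ := exists_mem_Trun_of_eq_one hnotone hj
  rcases hblocks ν ⟨hν, hν₁⟩ with ⟨hνJ, hTJ, hTTh⟩ | ⟨hνJ, hTJ, hTTh⟩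
  · have hj' : j - 1 ∈ J' := hprev.elim (· ▸ hνJ) (@hTJ _)
    have hjTh : j ∉ JTh := fun h => (Set.eq_empty_iff_forall_notMem.mp hTTh) j ⟨hjT, h⟩
    simp [hj', hTJ hjT, hjTh]
  · have hj' : j - 1 ∉ J' :=
      hprev.elim (· ▸ hνJ) fun h h' => (Set.eq_empty_iff_forall_notMem.mp hTJ) _ ⟨h, h'⟩
    have hjJ : j ∉ J' := fun h => (Set.eq_empty_iff_forall_notMem.mp hTJ) j ⟨hjT, h⟩
    simp [hj', hjJ, hTTh hjT]

theorem sGamma_sub_sW_bth (hagree : ∀ i, k i ≠ 1 → (i ∈ J' ↔ i ∈ JTh))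
    (hrun : ∀ j, k j = 1 → (j - 1 ∈ J' ↔ j ∈ J') ∧ (j ∈ JTh ↔ j ∉ J'))
    (j : ZMod f) :
    sGamma p f k J' JTh j - sW f (bth1 p f k) (bth2 f k) JTh j
      = p * carry f k J' (j - 1) - carry f k J' j := by
  by_cases hk : k j = 1
  · obtain ⟨hprev, hTh⟩ := hrun j hk
    by_cases hJ : j ∈ J'
    · simp only [sGamma, hJ, ↓reduceIte, sW, bp1, hk, hTh, not_true_eq_false, bth2, ne_eq, false_and,
        sub_zero, carry, hprev.mpr hJ, sub_add_cancel, and_self, mul_one, true_and]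
      split_ifs <;> ring
    · simp [sGamma, sW, carry, hJ, hk, mt hprev.mp hJ]
  · by_cases hJ : j ∈ J'
    · simp only [sGamma, hJ, ↓reduceIte, sW, bp1, hk, (hagree j hk).mp hJ, bth1, carry,
        sub_add_cancel, and_false, mul_zero, true_and, zero_sub]
      split_ifs <;> ring
    · simp [sGamma, sW, carry, hk, hJ]

theorem sGamma_sub_sW_bp (hagree : ∀ i, k i ≠ 1 → (i ∈ J' ↔ i ∈ JTh))
    (hrun : ∀ j, k j = 1 → (j - 1 ∈ J' ↔ j ∈ J') ∧ (j ∈ JTh ↔ j ∉ J'))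
    (j : ZMod f) :
    sGamma p f k J' JTh j - sW f (bp1 p f k) (zero2 f) J' j
      = p * carry f k J'ᶜ (j - 1) - carry f k J'ᶜ j := by
  by_cases hk : k j = 1
  · obtain ⟨hprev, hTh⟩ := hrun j hk
    by_cases hJ : j ∈ J'
    · simp [sGamma, sW, carry, hJ, hk, hprev.mpr hJ]
    · simp only [sGamma, hJ, ↓reduceIte, sW, hTh, not_false_eq_true, bth1, hk, zero2, sub_zero,
        carry, Set.mem_compl_iff, mt hprev.mp hJ, sub_add_cancel, and_self, mul_one, true_and]
      split_ifs <;> ring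
  · by_cases hJ : j ∈ J'
    · simp [sGamma, sW, carry, hk, hJ]
    · simp only [sGamma, hJ, ↓reduceIte, sW, mt (hagree j hk).mpr hJ, bth2, ne_eq, hk,
        not_false_eq_true, true_and, zero2, sub_zero, carry, Set.mem_compl_iff, sub_add_cancel,
        and_false, mul_zero, zero_sub]
      split_ifs <;> ring

end

theorem stmt17_general (p f : ℕ) (hf : 1 ≤ f)
    (k : ZMod f → ℤ)
    (hnotone : ∃ i, k i ≠ 1)
    (J' JTh : Set (ZMod f))
    (hagree : ∀ i, k i ≠ 1 → (i ∈ J' ↔ i ∈ JTh))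
    (hblocks : ∀ ν, (k ν ≠ 1 ∧ k (ν + 1) = 1) →
      (ν ∈ J' ∧ Trun f k ν ⊆ J' ∧ Trun f k ν ∩ JTh = ∅) ∨
      (ν ∉ J' ∧ Trun f k ν ∩ J' = ∅ ∧ Trun f k ν ⊆ JTh))
    (sg tg : ZMod f → ℤ)
    (hsg : ∀ i, sg i = if i ∈ J' then sW f (bp1 p f k) (zero2 f) J' i
      else sW f (bth1 p f k) (bth2 f k) JTh i)
    (htg : ∀ i, tg i = if i ∈ J' then tW f (bp1 p f k) (zero2 f) J' i
      else tW f (bth1 p f k) (bth2 f k) JTh i) :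
    ∀ i : ZMod f,
      Ai p f sg (sW f (bth1 p f k) (bth2 f k) JTh) i
        = (if i ∈ J' ∧ k (i + 1) = 1 then (p : ℤ) ^ f - 1 else 0) ∧
      Ai p f (tW f (bth1 p f k) (bth2 f k) JTh) tg i
        = (if i ∈ J' ∧ k (i + 1) = 1 then (p : ℤ) ^ f - 1 else 0) ∧
      Ai p f sg (sW f (bp1 p f k) (zero2 f) J') i
        = (if i ∉ J' ∧ k (i + 1) = 1 then (p : ℤ) ^ f - 1 else 0) ∧
      Ai p f (tW f (bp1 p f k) (zero2 f) J') tg i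
        = (if i ∉ J' ∧ k (i + 1) = 1 then (p : ℤ) ^ f - 1 else 0) := by
  have : NeZero f := ⟨by omega⟩
  obtain rfl : sg = sGamma p f k J' JTh := funext hsg
  obtain rfl : tg = tGamma p f k J' JTh := funext htg
  have hrun j (hj : k j = 1) := mem_sub_one_iff_and_mem_JTh_iff hnotone hblocks hj
  have hΘ := sGamma_sub_sW_bth (p := p) hagree hrun
  have h' := sGamma_sub_sW_bp (p := p) hagree hrun
  have htΘ j := (tW_sub_tGamma (fun _ => rfl) j).trans (hΘ j)
  have ht' j := (tW_sub_tGamma (fun j => by rw [zero2, add_zero, bp1_eq_bth1_add_bth2]) j).trans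
    (h' j)
  intro i
  simp only [Ai_eq_of_sub_eq _ _ _ _ _ hΘ, Ai_eq_of_sub_eq _ _ _ _ _ htΘ,
    Ai_eq_of_sub_eq _ _ _ _ _ h', Ai_eq_of_sub_eq _ _ _ _ _ ht', carry, Set.mem_compl_iff, mul_ite,
    mul_one, mul_zero, and_self]

/-- Lemma A.7 of the paper: the values of the `A_i` comparing the auxiliary weight
`(s^γ, t^γ)` with `(s′, t′)` and `(s^Θ, t^Θ)`. -/
theorem stmt17 (p f : ℕ) (hp : p.Prime) (hodd : Odd p) (hf : 1 ≤ f)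
    (k : ZMod f → ℤ)
    (hk : ∀ i, 1 ≤ k i ∧ k i ≤ (p : ℤ))
    (hone : ∃ i, k i = 1) (hnotone : ∃ i, k i ≠ 1)
    (h21 : ∀ i, ¬(k i = 2 ∧ k (i + 1) = 1))
    (J' JTh : Set (ZMod f))
    (hagree : ∀ i, k i ≠ 1 → (i ∈ J' ↔ i ∈ JTh))
    (hblocks : ∀ ν, (k ν ≠ 1 ∧ k (ν + 1) = 1) →
      (ν ∈ J' ∧ Trun f k ν ⊆ J' ∧ Trun f k ν ∩ JTh = ∅) ∨
      (ν ∉ J' ∧ Trun f k ν ∩ J' = ∅ ∧ Trun f k ν ⊆ JTh))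
    (sg tg : ZMod f → ℤ)
    (hsg : ∀ i, sg i = if i ∈ J' then sW f (bp1 p f k) (zero2 f) J' i
      else sW f (bth1 p f k) (bth2 f k) JTh i)
    (htg : ∀ i, tg i = if i ∈ J' then tW f (bp1 p f k) (zero2 f) J' i
      else tW f (bth1 p f k) (bth2 f k) JTh i) :
    ∀ i : ZMod f,
      Ai p f sg (sW f (bth1 p f k) (bth2 f k) JTh) i
        = (if i ∈ J' ∧ k (i + 1) = 1 then (p : ℤ) ^ f - 1 else 0) ∧
      Ai p f (tW f (bth1 p f k) (bth2 f k) JTh) tg i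
        = (if i ∈ J' ∧ k (i + 1) = 1 then (p : ℤ) ^ f - 1 else 0) ∧
      Ai p f sg (sW f (bp1 p f k) (zero2 f) J') i
        = (if i ∉ J' ∧ k (i + 1) = 1 then (p : ℤ) ^ f - 1 else 0) ∧
      Ai p f (tW f (bp1 p f k) (zero2 f) J') tg i
        = (if i ∉ J' ∧ k (i + 1) = 1 then (p : ℤ) ^ f - 1 else 0) :=
  stmt17_general p f hf k hnotone J' JTh hagree hblocks sg tg hsg htg
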